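/- Let C be a triangulated category carrying both a weight structure w and a t-structure t, and suppose they are left adjacent, i.e., C_{w≤0} ⊥ C_{t≥1} and C_{w≥0} ⊥ C_{t≤-1}. Then C_{w≥0} = C_{t≥0}. -/

import Mathlib

open CategoryTheory CategoryTheory.Limits CategoryTheory.Pretriangulated ZeroObject

universe w' v u

variable (C : Type u) [Category.{v} C] [HasZeroObject C] [HasShift C ℤ]
  [Preadditive C] [∀ n : ℤ, (shiftFunctor C n).Additive] [Pretriangulated C]

/-- A t-structure `t = (C_{t≤0}, C_{t≥0})` on a triangulated category, in the homological
convention of the paper.  `le` is the class `C_{t≤0}` and `ge` is the class `C_{t≥0}`.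
The condition `C_{t≤0} ⊆ C_{t≤0}[1]` is encoded as `le X → le (X⟦-1⟧)` (the classes being
closed under isomorphism), and `C_{t≥0}[1] ⊆ C_{t≥0}` as `ge X → ge (X⟦1⟧)`.
The class `C_{t≤i} = C_{t≤0}[i]` is `fun X => le (X⟦-i⟧)` and similarly for `C_{t≥i}`. -/
structure PaperTStructure where
  /-- the class `C_{t≤0}` -/
  le : C → Prop
  /-- the class `C_{t≥0}` -/
  ge : C → Prop
  le_iso : ∀ {X Y : C}, (X ≅ Y) → le X → le Y
  ge_iso : ∀ {X Y : C}, (X ≅ Y) → ge X → ge Y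
  le_shift : ∀ X : C, le X → le (X⟦(-1 : ℤ)⟧)
  ge_shift : ∀ X : C, ge X → ge (X⟦(1 : ℤ)⟧)
  /-- `C_{t≥0}[1] ⊥ C_{t≤0}` -/
  orth : ∀ (X Y : C), ge X → le Y → ∀ f : X⟦(1 : ℤ)⟧ ⟶ Y, f = 0
  /-- every object `M` admits a `t`-decomposition `L → M → R → L[1]` with `L ∈ C_{t≥0}`,
  `R ∈ C_{t≤0}[-1]` (i.e. `R⟦1⟧ ∈ C_{t≤0}`) -/
  decomp : ∀ M : C, ∃ (L R : C) (f : L ⟶ M) (g : M ⟶ R) (h : R ⟶ L⟦(1 : ℤ)⟧),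
    (Triangle.mk f g h ∈ distTriang C) ∧ ge L ∧ le (R⟦(1 : ℤ)⟧)

/-- A weight structure `w = (C_{w≤0}, C_{w≥0})` on a triangulated category, in the homological
convention of the paper.  `le` is the class `C_{w≤0}` and `ge` is the class `C_{w≥0}`;
both are retraction-closed.  `C_{w≤i} = C_{w≤0}[i]` is `fun X => le (X⟦-i⟧)`, similarly `ge`. -/
structure PaperWeightStructure where
  /-- the class `C_{w≤0}` -/
  le : C → Prop
  /-- the class `C_{w≥0}` -/
  ge : C → Prop
  le_retract : ∀ (X Y : C), le Y → (∃ (i : X ⟶ Y) (r : Y ⟶ X), i ≫ r = 𝟙 X) → le X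
  ge_retract : ∀ (X Y : C), ge Y → (∃ (i : X ⟶ Y) (r : Y ⟶ X), i ≫ r = 𝟙 X) → ge X
  le_shift : ∀ X : C, le X → le (X⟦(-1 : ℤ)⟧)
  ge_shift : ∀ X : C, ge X → ge (X⟦(1 : ℤ)⟧)
  /-- `C_{w≤0} ⊥ C_{w≥0}[1]` -/
  orth : ∀ (X Y : C), le X → ge Y → ∀ f : X ⟶ Y⟦(1 : ℤ)⟧, f = 0
  /-- every object `M` admits a weight decomposition `L → M → R → L[1]` with `L ∈ C_{w≤0}`,
  `R ∈ C_{w≥0}[1]` (i.e. `R⟦-1⟧ ∈ C_{w≥0}`) -/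
  decomp : ∀ M : C, ∃ (L R : C) (f : L ⟶ M) (g : M ⟶ R) (h : R ⟶ L⟦(1 : ℤ)⟧),
    (Triangle.mk f g h ∈ distTriang C) ∧ le L ∧ ge (R⟦(-1 : ℤ)⟧)

/-- A class of objects is extension-closed if it contains `0` and for every distinguished
triangle `X → Y → Z → X[1]` with `X, Z` in the class, `Y` lies in the class. -/
def ExtClosed (P : C → Prop) : Prop :=
  P (0 : C) ∧ ∀ T : Triangle C, (T ∈ distTriang C) → P T.obj₁ → P T.obj₃ → P T.obj₂

/-- A class of objects is retraction-closed if it contains all retracts of its elements. -/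
def RetractClosed (P : C → Prop) : Prop :=
  ∀ X Y : C, P Y → (∃ (i : X ⟶ Y) (r : Y ⟶ X), i ≫ r = 𝟙 X) → P X

namespace PaperTStructure

variable {C} (t : PaperTStructure C)

lemma hom_eq_zero_of_ge_of_le_shift {X Y : C} (hX : t.ge X) (hY : t.le (Y⟦(1 : ℤ)⟧))
    (f : X ⟶ Y) : f = 0 :=
  (shiftFunctor C (1 : ℤ)).map_injective (by simpa using t.orth X _ hX hY (f⟦(1 : ℤ)⟧'))

/-- In the `t`-decomposition `L → M → R → L[1]` the map `M → R` vanishes, so `L[1] → R` is a split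
mono; its retraction is a map from `C_{t≥0}` to `C_{t≤-1}`, hence zero, and so `R ≅ 0`. -/
lemma ge_of_forall_hom_eq_zero {M : C}
    (hM : ∀ Y : C, t.le (Y⟦(1 : ℤ)⟧) → ∀ f : M ⟶ Y, f = 0) : t.ge M := by
  obtain ⟨L, R, f, g, h, hT, hL, hR⟩ := t.decomp M
  have : Mono h := Triangle.mono₃ _ hT (hM R hR g)
  have : IsSplitMono h := isSplitMono_of_mono h
  have hr : retraction h = 0 :=
    t.hom_eq_zero_of_ge_of_le_shift (t.ge_shift L hL) hR (retraction h)
  have hRzero : IsZero R := by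
    rw [IsZero.iff_id_eq_zero, ← IsSplitMono.id h, hr, comp_zero]
  have : IsIso f := (Triangle.isZero₃_iff_isIso₁ _ hT).1 hRzero
  exact t.ge_iso (asIso f) hL

end PaperTStructure

namespace PaperWeightStructure

variable {C} (w : PaperWeightStructure C)

lemma ge_of_retract {X Y : C} (h : Retract X Y) (hY : w.ge Y) : w.ge X :=
  w.ge_retract X Y hY ⟨h.i, h.r, h.retract⟩

/-- In the weight decomposition `L → M[1] → R → L[1]` the map `L → M[1]` vanishes, so `M[1]` is a
retract of `R`, and `M` one of `R[-1] ∈ C_{w≥0}`. -/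
lemma ge_of_forall_hom_eq_zero {M : C}
    (hM : ∀ L : C, w.le L → ∀ f : L ⟶ M⟦(1 : ℤ)⟧, f = 0) : w.ge M := by
  obtain ⟨L, R, f, g, h, hT, hL, hR⟩ := w.decomp (M⟦(1 : ℤ)⟧)
  have : Mono g := Triangle.mono₂ _ hT (hM L hL f)
  have : IsSplitMono g := isSplitMono_of_mono g
  let retractShift : Retract (M⟦(1 : ℤ)⟧) R := ⟨g, retraction g, IsSplitMono.id g⟩
  exact w.ge_of_retract
    ((Retract.ofIso (shiftShiftNeg M (1 : ℤ)).symm).trans (retractShift.map _)) hR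

end PaperWeightStructure

/-- if a weight structure `w` and a t-structure `t` on `C` are left adjacent,
i.e. `C_{w≤0} ⊥ C_{t≥1}` and `C_{w≥0} ⊥ C_{t≤-1}`, then `C_{w≥0} = C_{t≥0}`.
Here `C_{t≥1} = {Y : Y⟦-1⟧ ∈ C_{t≥0}}` and `C_{t≤-1} = {Y : Y⟦1⟧ ∈ C_{t≤0}}`. -/
theorem stmt11 (w : PaperWeightStructure C) (t : PaperTStructure C)
    (h1 : ∀ X Y : C, w.le X → t.ge (Y⟦(-1 : ℤ)⟧) → ∀ f : X ⟶ Y, f = 0)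
    (h2 : ∀ X Y : C, w.ge X → t.le (Y⟦(1 : ℤ)⟧) → ∀ f : X ⟶ Y, f = 0) :
    ∀ X : C, w.ge X ↔ t.ge X := by
  intro X
  constructor
  · intro hX
    exact t.ge_of_forall_hom_eq_zero fun Y hY f => h2 X Y hX hY f
  · intro hX
    exact w.ge_of_forall_hom_eq_zero fun L hL f =>
      h1 L _ hL (t.ge_iso (shiftShiftNeg X (1 : ℤ)).symm hX) f
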